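/- For all k, l ≥ 1, N_{k,l} = Σ_{i=1}^{l} Σ_{j=1}^{k} N_{k-j, i-1} · Y_{j, k-j}, with the conventions N_{0,m} = 1 and N_{m,0} = 0 for m ≥ 1. -/

import Mathlib

/-- The permutation (as a ranking function) associated to a choice `c` of one
column in each of the `k` rows of a `k × l` matrix: `σ_c i` is the number of
indices `m` with `c m < c i`, or `c m = c i` and `m ≤ i`. -/
def sigmaC {k l : ℕ} (c : Fin k → Fin l) (i : Fin k) : ℕ :=
  (Finset.univ.filter (fun m => c m < c i ∨ (c m = c i ∧ m ≤ i))).card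

/-- The sign of `σ_c`, computed as the parity of its number of inversions. -/
def sgnC {k l : ℕ} (c : Fin k → Fin l) : ℤ :=
  (-1) ^ ((Finset.univ.filter
    (fun p : Fin k × Fin k => p.1 < p.2 ∧ sigmaC c p.2 < sigmaC c p.1)).card)

/-- `N k l`: the signed count of ways to choose one entry in each row of a
`k × l` matrix. -/
def N (k l : ℕ) : ℤ := ∑ c : Fin k → Fin l, sgnC c

/-- `Y p q = binom(⌊(p+q)/2⌋, ⌊p/2⌋)` if `p` or `q` is even, and `0` otherwise. -/
def Y (p q : ℕ) : ℤ :=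
  if Even p ∨ Even q then (((p + q) / 2).choose (p / 2) : ℤ) else 0

/-!
Since `σ_c j < σ_c i` for `i < j` exactly when `c j < c i`, the sign of `σ_c` is `(-1)` to the
number of inversions of the word `c`. Prepending two letters `a, b` to a word `d` multiplies its
sign by `(-1)^[b < a] x_a x_b`, where `x_v = ±1` depends only on `d`; summed over `a, b` the
off-diagonal terms cancel in pairs, leaving `l`, so `N_{k,l} = l ^ ⌈k/2⌉`. By this closed form,
splitting `j` by parity turns `∑_{j=0}^{k} N_{k-j,n} Y_{j,k-j}` into the binomial expansion of
`(n+1) ^ ⌈k/2⌉ = N_{k,n+1}`. The `j = 0` term is `N_{k,n}`, so the inner sum of the recursion is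
`N_{k,i} - N_{k,i-1}`, and the sum over `i` telescopes to `N_{k,l} - N_{k,0} = N_{k,l}`.
-/

open Finset

section Inversions

variable {α : Type*} [LinearOrder α]

def inversionCount {k : ℕ} (c : Fin k → α) : ℕ :=
  #{p : Fin k × Fin k | p.1 < p.2 ∧ c p.2 < c p.1}

lemma inversionCount_of_le_one {k : ℕ} (hk : k ≤ 1) (c : Fin k → α) :
    inversionCount c = 0 := by
  simp only [inversionCount, card_eq_zero, filter_eq_empty_iff]
  omega

lemma inversionCount_cons {k : ℕ} (a : α) (d : Fin k → α) :
    inversionCount (Fin.cons a d : Fin (k + 1) → α) = #{q | d q < a} + inversionCount d := by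
  simp only [inversionCount, card_filter]
  rw [Fintype.sum_prod_type, Fintype.sum_prod_type, Fin.sum_univ_succ]
  simp [Fin.card_filter_univ_succ', Fin.succ_pos]

end Inversions

lemma card_filter_le_lt_card_filter_le_iff {ι β : Type*} [Fintype ι] [LinearOrder β]
    (f : ι → β) {i j : ι} : #{m | f m ≤ f i} < #{m | f m ≤ f j} ↔ f i < f j := by
  have hmono : ∀ {i j}, f i ≤ f j →
      univ.filter (f · ≤ f i) ⊆ univ.filter (f · ≤ f j) :=
    fun h m => by simpa using fun hm => hm.trans h
  constructor
  · contrapose!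
    exact fun hji => card_le_card (hmono hji)
  · exact fun hij =>
      card_lt_card ((ssubset_iff_of_subset (hmono hij.le)).2 ⟨j, by simp, by simpa using hij⟩)

lemma sigmaC_eq_card_toLex_le {k l : ℕ} (c : Fin k → Fin l) (i : Fin k) :
    sigmaC c i = #{m | toLex (c m, m) ≤ toLex (c i, i)} := by
  simp only [sigmaC, Prod.Lex.toLex_le_toLex]

lemma sigmaC_lt_sigmaC_iff {k l : ℕ} (c : Fin k → Fin l) {i j : Fin k} (hij : i < j) :
    sigmaC c j < sigmaC c i ↔ c j < c i := by
  simp only [sigmaC_eq_card_toLex_le,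
    card_filter_le_lt_card_filter_le_iff (fun m => toLex (c m, m)), Prod.Lex.toLex_lt_toLex,
    hij.not_gt, and_false, or_false]

lemma sgnC_eq_neg_one_pow_inversionCount {k l : ℕ} (c : Fin k → Fin l) :
    sgnC c = (-1) ^ inversionCount c := by
  unfold sgnC inversionCount
  congr 2
  exact filter_congr fun p _ => and_congr_right (sigmaC_lt_sigmaC_iff c)

lemma sum_pi_fin_succ {β M : Type*} [Fintype β] [AddCommMonoid M] {k : ℕ}
    (f : (Fin (k + 1) → β) → M) :
    ∑ c, f c = ∑ d : Fin k → β, ∑ a, f (Fin.cons a d) := by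
  rw [← (Fin.consEquiv fun _ => β).sum_comp, Fintype.sum_prod_type_right]
  rfl

lemma sum_sum_ite_lt_mul_mul {ι : Type*} [Fintype ι] [LinearOrder ι] (x : ι → ℤ) :
    ∑ i, ∑ j, (if i < j then -1 else 1) * (x i * x j) = ∑ i, x i ^ 2 := by
  have hswap : ∑ i, ∑ j, (if i < j then -1 else 1) * (x i * x j)
      = ∑ i, ∑ j, (if j < i then -1 else 1) * (x i * x j) := by
    rw [sum_comm]
    exact sum_congr rfl fun i _ => sum_congr rfl fun j _ => by ring
  have hsign : ∀ i j : ι, ((if i < j then -1 else 1) + (if j < i then -1 else 1) : ℤ)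
      = if i = j then 2 else 0 := by
    intro i j
    rcases lt_trichotomy i j with h | rfl | h
    · simp [h, h.ne, h.not_gt]
    · simp
    · simp [h, h.ne', h.not_gt]
  have hdouble :
      2 * ∑ i, ∑ j, (if i < j then -1 else 1) * (x i * x j) = 2 * ∑ i, x i ^ 2 := by
    calc 2 * ∑ i, ∑ j, (if i < j then -1 else 1) * (x i * x j)
        = ∑ i, ∑ j, ((if i < j then -1 else 1) + (if j < i then -1 else 1)) * (x i * x j) := by
          rw [two_mul]
          nth_rewrite 2 [hswap]
          simp only [← sum_add_distrib, add_mul]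
      _ = 2 * ∑ i, x i ^ 2 := by simp [hsign, mul_sum, sq]
  linarith

lemma N_eq_sum_neg_one_pow_inversionCount (k l : ℕ) :
    N k l = ∑ c : Fin k → Fin l, (-1) ^ inversionCount c :=
  sum_congr rfl fun c _ => sgnC_eq_neg_one_pow_inversionCount c

lemma N_add_two (k l : ℕ) : N (k + 2) l = l * N k l := by
  have hsum : ∀ d : Fin k → Fin l,
      ∑ b, ∑ a, (-1 : ℤ) ^ inversionCount (Fin.cons a (Fin.cons b d) : Fin (k + 2) → Fin l)
        = l * (-1 : ℤ) ^ inversionCount d := by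
    intro d
    set x : Fin l → ℤ := fun v => (-1) ^ #{q | d q < v}
    have hterm : ∀ a b,
        (-1 : ℤ) ^ inversionCount (Fin.cons a (Fin.cons b d) : Fin (k + 2) → Fin l)
        = (if b < a then -1 else 1) * (x b * x a) * (-1) ^ inversionCount d := by
      intro a b
      simp only [inversionCount_cons, Fin.card_filter_univ_succ', Fin.cons_zero, Fin.cons_succ,
        pow_add, x]
      split_ifs <;> ring
    simp_rw [hterm, ← sum_mul, sum_sum_ite_lt_mul_mul]
    simp [x, ← pow_mul]
  rw [N_eq_sum_neg_one_pow_inversionCount, N_eq_sum_neg_one_pow_inversionCount, mul_sum,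
    sum_pi_fin_succ, sum_pi_fin_succ fun d' => ∑ a, (-1 : ℤ) ^ inversionCount (Fin.cons a d')]
  exact sum_congr rfl fun d _ => hsum d

lemma N_eq_pow : ∀ k l : ℕ, N k l = (l : ℤ) ^ ((k + 1) / 2)
  | 0, l => by simp [N_eq_sum_neg_one_pow_inversionCount, inversionCount_of_le_one]
  | 1, l => by simp [N_eq_sum_neg_one_pow_inversionCount, inversionCount_of_le_one]
  | k + 2, l => by
    rw [N_add_two, N_eq_pow k l, show (k + 2 + 1) / 2 = (k + 1) / 2 + 1 by omega, pow_succ']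

lemma sum_range_two_mul {M : Type*} [AddCommMonoid M] (f : ℕ → M) (K : ℕ) :
    ∑ j ∈ range (2 * K), f j = ∑ a ∈ range K, (f (2 * a) + f (2 * a + 1)) := by
  induction K with
  | zero => simp
  | succ K ih =>
    rw [mul_add, mul_one, sum_range_succ, sum_range_succ, sum_range_succ, ih, add_assoc]

lemma Y_two_mul (a q : ℕ) : Y (2 * a) q = (a + q / 2).choose a := by
  simp only [Y, even_two_mul, true_or, if_true]
  congr 3 <;> omega

lemma Y_two_mul_add_one_two_mul (a b : ℕ) : Y (2 * a + 1) (2 * b) = (a + b).choose a := by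
  simp only [Y, even_two_mul, or_true, if_true]
  congr 3 <;> omega

lemma Y_two_mul_add_one_two_mul_add_one (a b : ℕ) : Y (2 * a + 1) (2 * b + 1) = 0 := by
  simp [Y, Nat.not_even_bit1]

lemma sum_range_pow_mul_choose (n : ℤ) (K : ℕ) :
    ∑ a ∈ range (K + 1), n ^ (K - a) * (K.choose a : ℤ) = (n + 1) ^ K := by
  rw [add_comm n 1, add_pow]
  simp

lemma sum_range_pow_mul_Y (n : ℤ) (k : ℕ) :
    ∑ j ∈ range (k + 1), n ^ ((k - j + 1) / 2) * Y j (k - j) = (n + 1) ^ ((k + 1) / 2) := by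
  obtain ⟨K, rfl | rfl⟩ := Nat.even_or_odd' k
  · rw [sum_range_succ, sum_range_two_mul, show (2 * K + 1) / 2 = K by omega,
      ← sum_range_pow_mul_choose, sum_range_succ]
    congr 1
    · refine sum_congr rfl fun a ha => ?_
      have ha : a < K := mem_range.1 ha
      rw [show 2 * K - 2 * a = 2 * (K - a) by omega,
        show 2 * K - (2 * a + 1) = 2 * (K - a - 1) + 1 by omega, Y_two_mul,
        Y_two_mul_add_one_two_mul_add_one, show a + 2 * (K - a) / 2 = K by omega,
        show (2 * (K - a) + 1) / 2 = K - a by omega]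
      ring
    · simp [Y_two_mul]
  · rw [show 2 * K + 1 + 1 = 2 * (K + 1) by ring, sum_range_two_mul,
      show 2 * (K + 1) / 2 = K + 1 by omega, pow_succ', ← sum_range_pow_mul_choose, mul_sum]
    refine sum_congr rfl fun a ha => ?_
    have ha : a < K + 1 := mem_range.1 ha
    rw [show 2 * K + 1 - 2 * a = 2 * (K - a) + 1 by omega,
      show 2 * K + 1 - (2 * a + 1) = 2 * (K - a) by omega, Y_two_mul,
      Y_two_mul_add_one_two_mul, show a + (2 * (K - a) + 1) / 2 = K by omega,
      show a + (K - a) = K by omega, show (2 * (K - a) + 1 + 1) / 2 = K - a + 1 by omega,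
      show (2 * (K - a) + 1) / 2 = K - a by omega]
    ring

lemma sum_Icc_N_mul_Y (k n : ℕ) :
    ∑ j ∈ Icc 1 k, N (k - j) n * Y j (k - j) = N k (n + 1) - N k n := by
  have h := sum_range_pow_mul_Y n k
  rw [range_eq_Ico, sum_eq_sum_Ico_succ_bot (Nat.succ_pos k), Nat.succ_eq_add_one, zero_add,
    Ico_add_one_right_eq_Icc] at h
  simp only [N_eq_pow]
  push_cast
  rw [← h]
  simp [Y]

theorem N_recursion (k l : ℕ) (hk : 1 ≤ k) :
    N k l = ∑ i ∈ Finset.Icc 1 l, ∑ j ∈ Finset.Icc 1 k,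
      N (k - j) (i - 1) * Y j (k - j) := by
  induction l with
  | zero => simp [N_eq_pow]; omega
  | succ l ih => rw [sum_Icc_succ_top (by omega), ← ih, Nat.add_sub_cancel, sum_Icc_N_mul_Y]; ring
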